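/- arXiv:1411.6667 — 2 statements merged into one kernel-verified Lean document; each statement's English description precedes it below -/
import Mathlib

section
/- Let ε ∈ (0,1/2), let θ ∈ (0,1/3], and let k be an integer with k ≥ 64/ε^{2/(1−θ)}. Then for every positive integer m there exists a code C ⊆ [k]^m with |C| ≥ k^{ε·θ·m} such that every two distinct codewords of C have longest common subsequence of length less than εm; equivalently, C can be corrected from a 1−ε fraction of worst-case deletions. (Corollary 2.7 of the paper.) -/
/-- `s` (of length `ℓ`) is a subsequence of `t` (of length `m`): there are indices
`i₁ < ⋯ < i_ℓ` with `t (i_j) = s j` for all `j`. -/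
def IsSubseq {α : Type*} {ℓ m : ℕ} (s : Fin ℓ → α) (t : Fin m → α) : Prop :=
  ∃ f : Fin ℓ → Fin m, StrictMono f ∧ ∀ j, t (f j) = s j

/-!
A maximal code in which no two words share a subsequence of length `ℓ = ⌈εm⌉` is a greedy
(Gilbert–Varshamov) code: the neighbourhoods of its words cover `[k]^m`. A word `u` has at most
`C(m,ℓ)² k^(m-ℓ)` neighbours (positions of the common subsequence in `u`, positions in the
neighbour, free remaining letters), so the code has at least `k^ℓ / C(m,ℓ)²` words. Since
`C(m,ℓ) ≤ (e/ε)^ℓ` and the bound on `k` gives `e²/ε² ≤ k^(1-θ)`, this is at least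
`k^(θℓ) ≥ k^(εθm)`.
-/

open Finset Real

theorem exists_pairwise_not_rel_card_le_card_mul {α : Type*} [Fintype α] [DecidableEq α]
    (R : α → α → Prop) [DecidableRel R] (hrefl : ∀ a, R a a) (hsymm : ∀ a b, R a b → R b a) (B : ℕ)
    (hB : ∀ a, #{b | R a b} ≤ B) :
    ∃ C : Finset α, (C : Set α).Pairwise (fun a b => ¬R a b) ∧ Fintype.card α ≤ #C * B := by
  classical
  -- a largest pairwise unrelated set is maximal, so the neighbourhoods of its elements cover `α`
  obtain ⟨C, hCmem, hCmax⟩ := exists_max_image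
    {C : Finset α | (C : Set α).Pairwise (fun a b => ¬R a b)} card ⟨∅, by simp⟩
  rw [mem_filter] at hCmem
  refine ⟨C, hCmem.2, ?_⟩
  have hcover : univ ⊆ C.biUnion fun a => {b | R a b} := by
    intro t _
    by_contra ht
    simp only [mem_biUnion, mem_filter, mem_univ, true_and, not_exists, not_and] at ht
    have htC : t ∉ C := fun htC => ht t htC (hrefl t)
    have hins : ((insert t C : Finset α) : Set α).Pairwise (fun a b => ¬R a b) := by
      rw [coe_insert]
      exact hCmem.2.insert_of_notMem htC fun b hb => ⟨fun h => ht b hb (hsymm _ _ h), ht b hb⟩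
    have := hCmax (insert t C) (by simpa using hins)
    rw [card_insert_of_notMem htC] at this
    omega
  calc Fintype.card α = #(univ : Finset α) := card_univ.symm
    _ ≤ _ := card_le_card hcover
    _ ≤ #C * B := card_biUnion_le_card_mul _ _ _ fun a _ => hB a

theorem card_filter_forall_apply_eq_le {β γ δ : Type*} [Fintype β] [Fintype γ] [Fintype δ]
    [DecidableEq γ] [DecidableEq δ] (f : β ↪ γ) (s : β → δ) :
    #{t : γ → δ | ∀ b, t (f b) = s b} ≤ Fintype.card δ ^ (Fintype.card γ - Fintype.card β) := by
  set S := (univ.map f)ᶜ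
  have hS : Fintype.card (S → δ) = Fintype.card δ ^ (Fintype.card γ - Fintype.card β) := by
    rw [Fintype.card_fun, Fintype.card_coe, card_compl, card_map, card_univ]
  rw [← hS, ← card_univ]
  refine card_le_card_of_injOn (fun t (x : S) => t x) (fun _ _ => mem_univ _) ?_
  intro t ht t' ht' htt'
  rw [mem_coe, mem_filter] at ht ht'
  funext x
  by_cases hx : x ∈ univ.map f
  · obtain ⟨b, -, rfl⟩ := mem_map.mp hx
    rw [ht.2, ht'.2]
  · exact congrFun htt' ⟨x, mem_compl.mpr hx⟩

theorem card_orderEmbedding_fin (ℓ m : ℕ) : Fintype.card (Fin ℓ ↪o Fin m) = m.choose ℓ := by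
  rw [Fintype.card_eq_nat_card, Nat.card_congr Set.powersetCard.ofFinEmbEquiv,
    Set.powersetCard.card, Nat.card_eq_fintype_card, Fintype.card_fin]

theorem isSubseq_iff_exists_orderEmbedding {α : Type*} {ℓ m : ℕ} {s : Fin ℓ → α}
    {t : Fin m → α} : IsSubseq s t ↔ ∃ f : Fin ℓ ↪o Fin m, ∀ j, t (f j) = s j :=
  ⟨fun ⟨f, hf, hfs⟩ => ⟨OrderEmbedding.ofStrictMono f hf, hfs⟩,
    fun ⟨f, hfs⟩ => ⟨f, f.strictMono, hfs⟩⟩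

open scoped Classical in
theorem card_isSubseq_le {α : Type*} [Fintype α] {ℓ : ℕ} (m : ℕ) (s : Fin ℓ → α) :
    #{t : Fin m → α | IsSubseq s t} ≤ m.choose ℓ * Fintype.card α ^ (m - ℓ) := by
  have hcover : ({t : Fin m → α | IsSubseq s t} : Finset _) ⊆
      univ.biUnion fun f : Fin ℓ ↪o Fin m => {t | ∀ j, t (f j) = s j} := by
    intro t ht
    obtain ⟨f, hf⟩ := isSubseq_iff_exists_orderEmbedding.mp (mem_filter.mp ht).2
    exact mem_biUnion.mpr ⟨f, mem_univ _, mem_filter.mpr ⟨mem_univ _, hf⟩⟩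
  calc _ ≤ _ := card_le_card hcover
    _ ≤ #(univ : Finset (Fin ℓ ↪o Fin m)) * Fintype.card α ^ (m - ℓ) :=
      card_biUnion_le_card_mul _ _ _ fun f _ => by
        simpa using card_filter_forall_apply_eq_le f.toEmbedding s
    _ = _ := by rw [card_univ, card_orderEmbedding_fin]

def ShareSubseq {α : Type*} {m n : ℕ} (ℓ : ℕ) (u : Fin m → α) (v : Fin n → α) : Prop :=
  ∃ s : Fin ℓ → α, IsSubseq s u ∧ IsSubseq s v

theorem ShareSubseq.symm {α : Type*} {m n ℓ : ℕ} {u : Fin m → α} {v : Fin n → α}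
    (h : ShareSubseq ℓ u v) : ShareSubseq ℓ v u :=
  let ⟨s, hu, hv⟩ := h; ⟨s, hv, hu⟩

theorem shareSubseq_self {α : Type*} {m ℓ : ℕ} (h : ℓ ≤ m) (u : Fin m → α) : ShareSubseq ℓ u u :=
  ⟨u ∘ Fin.castLE h, ⟨Fin.castLE h, Fin.strictMono_castLE h, fun _ => rfl⟩,
    ⟨Fin.castLE h, Fin.strictMono_castLE h, fun _ => rfl⟩⟩

open scoped Classical in
theorem card_shareSubseq_le {α : Type*} [Fintype α] {m : ℕ} (ℓ : ℕ) (u : Fin m → α) :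
    #{t : Fin m → α | ShareSubseq ℓ u t} ≤
      m.choose ℓ * (m.choose ℓ * Fintype.card α ^ (m - ℓ)) := by
  have hcover : ({t : Fin m → α | ShareSubseq ℓ u t} : Finset _) ⊆
      univ.biUnion fun f : Fin ℓ ↪o Fin m => {t | IsSubseq (u ∘ f) t} := by
    intro t ht
    obtain ⟨s, hsu, hst⟩ := (mem_filter.mp ht).2
    obtain ⟨f, hf⟩ := isSubseq_iff_exists_orderEmbedding.mp hsu
    obtain rfl : u ∘ f = s := funext hf
    exact mem_biUnion.mpr ⟨f, mem_univ _, mem_filter.mpr ⟨mem_univ _, hst⟩⟩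
  calc _ ≤ _ := card_le_card hcover
    _ ≤ #(univ : Finset (Fin ℓ ↪o Fin m)) * (m.choose ℓ * Fintype.card α ^ (m - ℓ)) :=
      card_biUnion_le_card_mul _ _ _ fun f _ => card_isSubseq_le m (u ∘ f)
    _ = _ := by rw [card_univ, card_orderEmbedding_fin]

theorem Nat.choose_le_exp_one_mul_div_pow (n r : ℕ) :
    (n.choose r : ℝ) ≤ (exp 1 * n / r) ^ r := by
  rcases Nat.eq_zero_or_pos r with rfl | hr
  · simp
  have hfact : (r : ℝ) ^ r / r.factorial ≤ exp 1 ^ r := by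
    rw [← exp_nat_mul, mul_one]
    exact pow_div_factorial_le_exp _ r.cast_nonneg r
  calc (n.choose r : ℝ) ≤ n ^ r / r.factorial := Nat.choose_le_pow_div r n
    _ = (n / r : ℝ) ^ r * (r ^ r / r.factorial) := by
      rw [div_pow]; field_simp
    _ ≤ (n / r : ℝ) ^ r * exp 1 ^ r := by gcongr
    _ = (exp 1 * n / r) ^ r := by rw [← mul_pow]; ring

theorem choose_le_exp_one_div_pow {ε : ℝ} (hε : 0 < ε) {m ℓ : ℕ} (hℓ : ε * m ≤ ℓ) :
    (m.choose ℓ : ℝ) ≤ (exp 1 / ε) ^ ℓ := by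
  refine (Nat.choose_le_exp_one_mul_div_pow m ℓ).trans (pow_le_pow_left₀ (by positivity) ?_ ℓ)
  rcases Nat.eq_zero_or_pos ℓ with rfl | hℓ0
  · rw [Nat.cast_zero, div_zero]; positivity
  rw [div_le_div_iff₀ (by positivity) hε]
  nlinarith [exp_pos 1]

theorem exp_one_sq_div_sq_le_rpow {ε θ : ℝ} (hε0 : 0 < ε) (hθ : θ ≤ 1 / 2)
    {k : ℝ} (hk : 64 / ε ^ (2 / (1 - θ)) ≤ k) : exp 1 ^ 2 / ε ^ 2 ≤ k ^ (1 - θ) := by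
  have hθ1 : 0 < 1 - θ := by linarith
  have h64 : exp 1 ^ 2 ≤ (64 : ℝ) ^ (1 - θ) :=
    calc exp 1 ^ 2 ≤ 8 := by nlinarith [exp_one_lt_d9, exp_pos 1]
      _ = (64 : ℝ) ^ (1 / 2 : ℝ) := by
        rw [← sqrt_eq_rpow, show (64 : ℝ) = 8 ^ 2 by norm_num, sqrt_sq (by norm_num)]
      _ ≤ (64 : ℝ) ^ (1 - θ) := rpow_le_rpow_of_exponent_le (by norm_num) (by linarith)
  calc exp 1 ^ 2 / ε ^ 2 ≤ 64 ^ (1 - θ) / ε ^ 2 := by gcongr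
    _ = (64 / ε ^ (2 / (1 - θ))) ^ (1 - θ) := by
      rw [div_rpow (by norm_num) (by positivity), ← rpow_mul hε0.le,
        div_mul_cancel₀ _ hθ1.ne', rpow_two]
    _ ≤ k ^ (1 - θ) := rpow_le_rpow (by positivity) hk hθ1.le

theorem rpow_mul_choose_sq_le_pow {ε θ : ℝ} (hε : 0 < ε) (hθ : 0 ≤ θ) {k : ℝ} (hk : 1 ≤ k)
    (hK : exp 1 ^ 2 / ε ^ 2 ≤ k ^ (1 - θ)) {m ℓ : ℕ} (hℓ : ε * m ≤ ℓ) :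
    k ^ (ε * θ * m) * (m.choose ℓ : ℝ) ^ 2 ≤ k ^ ℓ := by
  have hk0 : 0 < k := by linarith
  calc k ^ (ε * θ * m) * (m.choose ℓ : ℝ) ^ 2
      ≤ k ^ (θ * ℓ) * ((exp 1 / ε) ^ ℓ) ^ 2 := by
        refine mul_le_mul (rpow_le_rpow_of_exponent_le hk (by nlinarith)) ?_ (by positivity)
          (by positivity)
        exact pow_le_pow_left₀ (by positivity) (choose_le_exp_one_div_pow hε hℓ) 2
    _ = k ^ (θ * ℓ) * (exp 1 ^ 2 / ε ^ 2) ^ ℓ := by rw [← pow_mul, mul_comm ℓ, pow_mul, div_pow]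
    _ ≤ k ^ (θ * ℓ) * (k ^ (1 - θ)) ^ ℓ := by gcongr
    _ = k ^ ℓ := by
      rw [← rpow_mul_natCast hk0.le, ← rpow_add hk0, ← rpow_natCast]
      ring_nf

theorem high_deletion_greedy_codes_general (ε θ : ℝ) (hε0 : 0 < ε) (hε1 : ε < 1 / 2)
    (hθ0 : 0 < θ) (hθ1 : θ ≤ 1 / 3)
    (k : ℕ) (hk : 64 / ε ^ (2 / (1 - θ)) ≤ (k : ℝ)) (m : ℕ) :
    ∃ C : Finset (Fin m → Fin k),
      (k : ℝ) ^ (ε * θ * m) ≤ C.card ∧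
      ∀ u ∈ C, ∀ v ∈ C, u ≠ v →
        ¬∃ s : Fin (⌈ε * m⌉₊) → Fin k, IsSubseq s u ∧ IsSubseq s v := by
  classical
  have hk1 : (1 : ℝ) ≤ k := by
    refine le_trans ?_ hk
    rw [le_div_iff₀ (by positivity), one_mul]
    have hexp : (0 : ℝ) ≤ 2 / (1 - θ) := div_nonneg zero_le_two (by linarith)
    exact (rpow_le_one hε0.le (by linarith) hexp).trans (by norm_num)
  have hk0 : 0 < k := Nat.one_le_cast.mp hk1
  set ℓ := ⌈ε * m⌉₊
  have hℓ : ε * m ≤ ℓ := Nat.le_ceil _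
  have hℓm : ℓ ≤ m := Nat.ceil_le.mpr (by nlinarith [(Nat.cast_nonneg m : (0 : ℝ) ≤ m)])
  set B := m.choose ℓ * (m.choose ℓ * k ^ (m - ℓ))
  have hB : 0 < B := by positivity [Nat.choose_pos hℓm]
  obtain ⟨C, hC, hcard⟩ := exists_pairwise_not_rel_card_le_card_mul (ShareSubseq ℓ)
    (shareSubseq_self hℓm) (fun _ _ => ShareSubseq.symm) B
    (by simpa using card_shareSubseq_le (α := Fin k) ℓ)
  refine ⟨C, ?_, fun u hu v hv huv => hC hu hv huv⟩
  have hkey : (k : ℝ) ^ (ε * θ * m) * B ≤ k ^ m := by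
    have := rpow_mul_choose_sq_le_pow hε0 hθ0.le hk1
      (exp_one_sq_div_sq_le_rpow hε0 (by linarith) hk) hℓ
    calc (k : ℝ) ^ (ε * θ * m) * B = (k ^ (ε * θ * m) * m.choose ℓ ^ 2) * k ^ (m - ℓ) := by
          simp only [B]; push_cast; ring
      _ ≤ k ^ ℓ * k ^ (m - ℓ) := by gcongr
      _ = k ^ m := by rw [← pow_add, Nat.add_sub_cancel' hℓm]
  have hkm : (k : ℝ) ^ m ≤ C.card * B := by exact_mod_cast (by simpa using hcard)
  exact le_of_mul_le_mul_right (hkey.trans hkm) (by exact_mod_cast hB)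

/-- Let `ε ∈ (0,1/2)`, `θ ∈ (0,1/3]`, and `k ≥ 64/ε^{2/(1-θ)}`. Then for every `m ≥ 1`
there exists a code `C ⊆ [k]^m` with `|C| ≥ k^{εθm}` such that every two distinct
codewords have longest common subsequence of length less than `εm` (no string of length
`⌈εm⌉` is a common subsequence of two distinct codewords); equivalently, `C` can be
corrected from a `1-ε` fraction of worst-case deletions. -/
theorem high_deletion_greedy_codes (ε θ : ℝ) (hε0 : 0 < ε) (hε1 : ε < 1 / 2)
    (hθ0 : 0 < θ) (hθ1 : θ ≤ 1 / 3)
    (k : ℕ) (hk : 64 / ε ^ (2 / (1 - θ)) ≤ (k : ℝ)) (m : ℕ) (hm : 0 < m) :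
    ∃ C : Finset (Fin m → Fin k),
      (k : ℝ) ^ (ε * θ * m) ≤ C.card ∧
      ∀ u ∈ C, ∀ v ∈ C, u ≠ v →
        ¬∃ s : Fin (⌈ε * m⌉₊) → Fin k, IsSubseq s u ∧ IsSubseq s v :=
  high_deletion_greedy_codes_general ε θ hε0 hε1 hθ0 hθ1 k hk m
end

section
/- Let ℓ, m, L be positive integers with ℓ ≤ m. The number of L-tuples (u₁, …, u_L) ∈ ({0,1}^m)^L for which there exists a single string s ∈ {0,1}^ℓ that is a subsequence of every uᵢ is at most 2^ℓ · (Σ_{t=ℓ}^{m} C(t−1, ℓ−1)·2^{m−t})^L, where C(a,b) denotes the binomial coefficient. (Counting core of the proof of Theorem 5.2 of the paper.) -/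
open Finset

variable {α : Type*} {ℓ m : ℕ}

theorem isSubseq_iff_sublist_ofFn {s : Fin ℓ → α} {t : Fin m → α} :
    IsSubseq s t ↔ (List.ofFn s).Sublist (List.ofFn t) := by
  rw [List.sublist_iff_exists_fin_orderEmbedding_get_eq]
  constructor
  · rintro ⟨f, hf, hft⟩
    refine ⟨(Fin.castOrderIso List.length_ofFn).toOrderEmbedding.trans
      ((OrderEmbedding.ofStrictMono f hf).trans
        (Fin.castOrderIso List.length_ofFn.symm).toOrderEmbedding), fun ix => ?_⟩
    simp only [List.get_ofFn]
    exact (hft _).symm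
  · rintro ⟨f, hf⟩
    refine ⟨fun j => Fin.cast List.length_ofFn (f (Fin.cast List.length_ofFn.symm j)),
      fun a b hab => by simpa using hab, fun j => ?_⟩
    have h := (hf (Fin.cast List.length_ofFn.symm j)).symm
    simp only [List.get_ofFn] at h
    exact h

instance [DecidableEq α] (s : Fin ℓ → α) (t : Fin m → α) : Decidable (IsSubseq s t) :=
  decidable_of_iff _ isSubseq_iff_sublist_ofFn.symm

theorem isSubseq_fin_zero_left (s : Fin 0 → α) (t : Fin m → α) : IsSubseq s t :=
  ⟨Fin.elim0, fun i => i.elim0, fun i => i.elim0⟩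

theorem not_isSubseq_fin_zero_right (s : Fin (ℓ + 1) → α) (t : Fin 0 → α) : ¬IsSubseq s t :=
  fun ⟨f, _⟩ => (f 0).elim0

theorem isSubseq_cons_cons_self {a : α} {s : Fin ℓ → α} {t : Fin m → α} :
    IsSubseq (Fin.cons a s : Fin (ℓ + 1) → α) (Fin.cons a t : Fin (m + 1) → α) ↔
      IsSubseq s t := by
  simp only [isSubseq_iff_sublist_ofFn, List.ofFn_cons, List.cons_sublist_cons]

theorem isSubseq_cons_cons_of_ne {a b : α} (hab : a ≠ b) {s : Fin ℓ → α} {t : Fin m → α} :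
    IsSubseq (Fin.cons a s : Fin (ℓ + 1) → α) (Fin.cons b t : Fin (m + 1) → α) ↔
      IsSubseq (Fin.cons a s : Fin (ℓ + 1) → α) t := by
  simp [isSubseq_iff_sublist_ofFn, List.sublist_cons_iff, hab]

theorem card_filter_fin_succ_pi [Fintype α] (P : (Fin (m + 1) → α) → Prop) [DecidablePred P] :
    #{u | P u} = ∑ b, #{u : Fin m → α | P (Fin.cons b u)} := by
  simp only [card_filter]
  rw [← (Fin.consEquiv fun _ => α).sum_comp, Fintype.sum_prod_type]
  rfl

section Counting

variable [Fintype α] [DecidableEq α]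

theorem card_isSubseq_fin_zero_left (s : Fin 0 → α) :
    #{u : Fin m → α | IsSubseq s u} = Fintype.card α ^ m := by
  simp [isSubseq_fin_zero_left]

theorem card_isSubseq_fin_zero_right (s : Fin (ℓ + 1) → α) :
    #{u : Fin 0 → α | IsSubseq s u} = 0 := by
  simp [not_isSubseq_fin_zero_right]

theorem card_isSubseq_cons_succ (a : α) (s : Fin ℓ → α) :
    #{u : Fin (m + 1) → α | IsSubseq (Fin.cons a s : Fin (ℓ + 1) → α) u} =
      #{u : Fin m → α | IsSubseq s u} +
        (Fintype.card α - 1) * #{u : Fin m → α | IsSubseq (Fin.cons a s : Fin (ℓ + 1) → α) u} := by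
  rw [card_filter_fin_succ_pi, Fintype.sum_eq_add_sum_compl a]
  simp only [isSubseq_cons_cons_self]
  have h_ne : ∀ b ∈ ({a}ᶜ : Finset α),
      #{u : Fin m → α | IsSubseq (Fin.cons a s : Fin (ℓ + 1) → α) (Fin.cons b u)} =
        #{u : Fin m → α | IsSubseq (Fin.cons a s : Fin (ℓ + 1) → α) u} := fun b hb => by
    simp only [isSubseq_cons_cons_of_ne (by simpa using hb : b ≠ a).symm]
  rw [sum_congr rfl h_ne, sum_const, card_compl, card_singleton, smul_eq_mul]

end Counting

def binarySupersequenceCount (ℓ m : ℕ) : ℕ :=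
  ∑ t ∈ Icc ℓ m, (t - 1).choose (ℓ - 1) * 2 ^ (m - t)

theorem binarySupersequenceCount_succ_succ (ℓ m : ℕ) :
    binarySupersequenceCount (ℓ + 1) (m + 1) = ∑ t ∈ Icc ℓ m, t.choose ℓ * 2 ^ (m - t) := by
  rw [binarySupersequenceCount, ← map_add_right_Icc ℓ m 1, sum_map]
  simp

theorem binarySupersequenceCount_one_succ (m : ℕ) :
    binarySupersequenceCount 1 (m + 1) = 2 ^ m + binarySupersequenceCount 1 m := by
  rw [binarySupersequenceCount_succ_succ, ← add_sum_Ioc_eq_sum_Icc m.zero_le,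
    binarySupersequenceCount, ← Icc_add_one_left_eq_Ioc]
  simp

theorem binarySupersequenceCount_add_two_succ (ℓ m : ℕ) :
    binarySupersequenceCount (ℓ + 2) (m + 1) =
      binarySupersequenceCount (ℓ + 1) m + binarySupersequenceCount (ℓ + 2) m := by
  have h_extend : binarySupersequenceCount (ℓ + 2) m =
      ∑ t ∈ Icc (ℓ + 1) m, (t - 1).choose (ℓ + 1) * 2 ^ (m - t) := by
    refine sum_subset (Icc_subset_Icc_left (by omega)) fun t ht hnt => ?_
    have : t = ℓ + 1 := by simp only [mem_Icc] at ht hnt; omega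
    simp [this]
  rw [binarySupersequenceCount_succ_succ, h_extend, binarySupersequenceCount,
    ← sum_add_distrib]
  refine sum_congr rfl fun t ht => ?_
  obtain ⟨t, rfl⟩ : ∃ t', t = t' + 1 :=
    Nat.exists_eq_add_one.mpr (by simp only [mem_Icc] at ht; omega)
  simp [Nat.choose_succ_succ, add_mul]

theorem card_isSubseq_fin_two (s : Fin (ℓ + 1) → Fin 2) :
    #{u : Fin m → Fin 2 | IsSubseq s u} = binarySupersequenceCount (ℓ + 1) m := by
  induction m generalizing ℓ with
  | zero => rw [card_isSubseq_fin_zero_right]; simp [binarySupersequenceCount]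
  | succ m ih =>
    rw [← Fin.cons_self_tail s, card_isSubseq_cons_succ, Fintype.card_fin, ih,
      Nat.add_one_sub_one, one_mul]
    cases ℓ with
    | zero => rw [card_isSubseq_fin_zero_left, Fintype.card_fin, binarySupersequenceCount_one_succ]
    | succ ℓ => rw [ih, binarySupersequenceCount_add_two_succ]

theorem ncard_setOf_exists_forall_le {ι σ β : Type*} [Fintype ι] [Fintype σ] [Fintype β]
    (P : σ → β → Prop) [∀ s, DecidablePred (P s)] :
    {w : ι → β | ∃ s, ∀ i, P s (w i)}.ncard ≤ ∑ s, #{b | P s b} ^ Fintype.card ι := by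
  classical
  have h_union : {w : ι → β | ∃ s, ∀ i, P s (w i)} =
      ↑(univ.biUnion fun s => Fintype.piFinset fun _ : ι => ({b | P s b} : Finset β)) := by
    ext w
    simp
  rw [h_union, Set.ncard_coe_finset]
  refine card_biUnion_le.trans_eq (sum_congr rfl fun s _ => ?_)
  rw [Fintype.card_piFinset, prod_const, card_univ]

theorem count_tuples_common_subseq_general (ℓ m L : ℕ) (hℓ : 0 < ℓ) :
    {w : Fin L → Fin m → Fin 2 |
        ∃ s : Fin ℓ → Fin 2, ∀ i, IsSubseq s (w i)}.ncard ≤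
      2 ^ ℓ * (∑ t ∈ Finset.Icc ℓ m, (t - 1).choose (ℓ - 1) * 2 ^ (m - t)) ^ L := by
  obtain ⟨ℓ, rfl⟩ := Nat.exists_eq_add_one.mpr hℓ
  calc _ ≤ ∑ s : Fin (ℓ + 1) → Fin 2, #{u : Fin m → Fin 2 | IsSubseq s u} ^ L := by
        simpa using ncard_setOf_exists_forall_le (ι := Fin L) (IsSubseq (m := m))
    _ = _ := by simp [card_isSubseq_fin_two, binarySupersequenceCount]

/-- Let `ℓ, m, L` be positive integers with `ℓ ≤ m`. The number of `L`-tuples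
`(u₁, …, u_L) ∈ ({0,1}^m)^L` for which there is a single string `s ∈ {0,1}^ℓ` that is a
subsequence of every `uᵢ` is at most
`2^ℓ (Σ_{t=ℓ}^{m} C(t-1, ℓ-1) 2^{m-t})^L`. -/
theorem count_tuples_common_subseq (ℓ m L : ℕ) (hℓ : 0 < ℓ) (hL : 0 < L) (hℓm : ℓ ≤ m) :
    {w : Fin L → Fin m → Fin 2 |
        ∃ s : Fin ℓ → Fin 2, ∀ i, IsSubseq s (w i)}.ncard ≤
      2 ^ ℓ * (∑ t ∈ Finset.Icc ℓ m, (t - 1).choose (ℓ - 1) * 2 ^ (m - t)) ^ L :=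
  count_tuples_common_subseq_general ℓ m L hℓ
end
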